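/- Let p ∈ ℝ^s be a probability vector (entries nonnegative, summing to 1). Then the spectral norm (largest absolute eigenvalue) of the matrix diag(p) − p pᵀ is at most 1/2. -/

import Mathlib

/-!
Schur test: if every row of `A` has absolute sum at most `r` and every column at most `c`, then
Cauchy–Schwarz row by row gives `‖A x‖² ≤ r c ‖x‖²`. For `M = diag p - p pᵀ` (symmetric) the
absolute row sum at `i` is `(p i - p i²) + p i (1 - p i) = 2 p i (1 - p i) ≤ 1/2`.
-/

/-- Spectral norm (operator 2-norm) of a real matrix. -/
noncomputable def specNorm {m n : Type*} [Fintype m] [Fintype n] [DecidableEq n]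
    (A : Matrix m n ℝ) : ℝ :=
  ‖LinearMap.toContinuousLinearMap (Matrix.toEuclideanLin A)‖

open Matrix Finset

section SchurTest

variable {m n : Type*} [Fintype m] [Fintype n]

lemma Matrix.sum_sq_mulVec_le_of_sum_abs_le (A : Matrix m n ℝ) {r c : ℝ}
    (hr : 0 ≤ r) (hrow : ∀ i, ∑ j, |A i j| ≤ r) (hcol : ∀ j, ∑ i, |A i j| ≤ c) (x : n → ℝ) :
    ∑ i, (A *ᵥ x) i ^ 2 ≤ r * c * ∑ j, x j ^ 2 := by
  have row_cs : ∀ i, (A *ᵥ x) i ^ 2 ≤ (∑ j, |A i j|) * ∑ j, |A i j| * x j ^ 2 := fun i =>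
    sum_sq_le_sum_mul_sum_of_sq_le_mul _ (fun j _ => abs_nonneg _)
      (fun j _ => by positivity) (fun j _ => le_of_eq (by rw [mul_pow, ← sq_abs (A i j)]; ring))
  calc ∑ i, (A *ᵥ x) i ^ 2 ≤ ∑ i, r * ∑ j, |A i j| * x j ^ 2 :=
        sum_le_sum fun i _ => (row_cs i).trans
          (mul_le_mul_of_nonneg_right (hrow i) (sum_nonneg fun j _ => by positivity))
    _ = r * ∑ j, (∑ i, |A i j|) * x j ^ 2 := by
        rw [← mul_sum, sum_comm]
        simp only [sum_mul]
    _ ≤ r * ∑ j, c * x j ^ 2 :=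
        mul_le_mul_of_nonneg_left
          (sum_le_sum fun j _ => mul_le_mul_of_nonneg_right (hcol j) (sq_nonneg _)) hr
    _ = r * c * ∑ j, x j ^ 2 := by rw [← mul_sum, mul_assoc]

lemma specNorm_le_sqrt_of_sum_abs_le [DecidableEq n] (A : Matrix m n ℝ) {r c : ℝ}
    (hr : 0 ≤ r) (hc : 0 ≤ c) (hrow : ∀ i, ∑ j, |A i j| ≤ r) (hcol : ∀ j, ∑ i, |A i j| ≤ c) :
    specNorm A ≤ √(r * c) := by
  refine ContinuousLinearMap.opNorm_le_bound _ (Real.sqrt_nonneg _) fun x => ?_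
  rw [LinearMap.coe_toContinuousLinearMap']
  refine le_of_sq_le_sq ?_ (by positivity)
  rw [mul_pow, Real.sq_sqrt (mul_nonneg hr hc), EuclideanSpace.real_norm_sq_eq,
    EuclideanSpace.real_norm_sq_eq]
  simpa using A.sum_sq_mulVec_le_of_sum_abs_le hr hrow hcol x

end SchurTest

section CovarianceMatrix

variable {n : Type*} [DecidableEq n] {p : n → ℝ}

lemma abs_diagonal_sub_vecMulVec_apply (hp0 : ∀ i, 0 ≤ p i) (hp1 : ∀ i, p i ≤ 1) (i j : n) :
    |(diagonal p - vecMulVec p p) i j| = p i * p j + if i = j then p i - 2 * p i ^ 2 else 0 := by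
  rcases eq_or_ne i j with rfl | hij
  · simp only [Matrix.sub_apply, diagonal_apply_eq, vecMulVec_apply, if_true]
    rw [abs_of_nonneg (by nlinarith [hp0 i, hp1 i])]
    ring
  · simp only [Matrix.sub_apply, diagonal_apply_ne _ hij, vecMulVec_apply, if_neg hij,
      zero_sub, abs_neg, abs_of_nonneg (mul_nonneg (hp0 i) (hp0 j)), add_zero]

lemma sum_abs_diagonal_sub_vecMulVec_apply [Fintype n] (hp0 : ∀ i, 0 ≤ p i) (hsum : ∑ i, p i = 1)
    (i : n) : ∑ j, |(diagonal p - vecMulVec p p) i j| = 2 * p i * (1 - p i) := by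
  have hp1 (j : n) : p j ≤ 1 := hsum ▸ single_le_sum (fun k _ => hp0 k) (mem_univ j)
  simp only [abs_diagonal_sub_vecMulVec_apply hp0 hp1, sum_add_distrib, ← mul_sum, hsum,
    sum_ite_eq, if_pos (mem_univ i)]
  ring

end CovarianceMatrix

theorem stmt_0 (s : ℕ) (p : Fin s → ℝ) (hp : ∀ i, 0 ≤ p i) (hsum : ∑ i, p i = 1) :
    specNorm (Matrix.diagonal p - Matrix.vecMulVec p p) ≤ 1 / 2 := by
  have hsymm : (diagonal p - vecMulVec p p).IsSymm :=
    (isSymm_diagonal p).sub (by simp [IsSymm, transpose_vecMulVec])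
  have hrow (i : Fin s) : ∑ j, |(diagonal p - vecMulVec p p) i j| ≤ 1 / 2 := by
    rw [sum_abs_diagonal_sub_vecMulVec_apply hp hsum]
    nlinarith [sq_nonneg (p i - 1 / 2)]
  have hcol (j : Fin s) : ∑ i, |(diagonal p - vecMulVec p p) i j| ≤ 1 / 2 := by
    simpa only [hsymm.apply] using hrow j
  calc specNorm (diagonal p - vecMulVec p p) ≤ √(1 / 2 * (1 / 2)) :=
        specNorm_le_sqrt_of_sum_abs_le _ (by norm_num) (by norm_num) hrow hcol
    _ = 1 / 2 := Real.sqrt_mul_self (by norm_num)
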